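/- arXiv:1609.05313 — 3 statements merged into one kernel-verified Lean document; each statement's English description precedes it below -/
import Mathlib

section
/- Let m and l be positive integers with l ≤ m, let E be an m×l real matrix with rank(E) = l, let D be an m×m diagonal real matrix with strictly positive diagonal entries D_ii, and let f ∈ ℝᵐ, c ∈ ℝˡ. Then the vector b* = (Eᵗ D⁻¹ E)⁻¹ Eᵗ D⁻¹ f is the unique minimizer over b ∈ ℝˡ of the weighted least-squares error Q(b) = Σ_{i=1}^{m} D_ii⁻¹ · ((E b)_i − f_i)², and moreover cᵗ b* = aᵗ f where a = D⁻¹ E (Eᵗ D⁻¹ E)⁻¹ c. -/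
/-!
Write `W = D⁻¹` and `G = Eᵀ W E`. Full column rank makes `E` injective, so `G` is positive
definite; in particular it is invertible and `b*` solves the normal equations
`Eᵀ W (E b* - f) = 0`. Expanding `Q` around `b*`, the cross term vanishes by the normal
equations, leaving `Q b = Q b* + (b - b*)ᵀ G (b - b*)`, whose last term is positive for `b ≠ b*`.
The identity `cᵀ b* = aᵀ f` is the transpose of `a = (G⁻¹ Eᵀ W)ᵀ c`, as `W` and `G` are symmetric.
-/

open Matrix

namespace Matrix

variable {ι κ R : Type*} [Fintype κ]

theorem mulVec_injective_of_rank_eq_card [Field R] {A : Matrix ι κ R}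
    (hA : A.rank = Fintype.card κ) : Function.Injective A.mulVec := by
  rw [mulVec_injective_iff, linearIndependent_iff_card_eq_finrank_span, Set.finrank,
    ← rank_eq_finrank_span_cols, hA]

variable [Fintype ι]

theorem inv_diagonal_of_ne_zero [Field R] [DecidableEq ι] {d : ι → R} (hd : ∀ i, d i ≠ 0) :
    (diagonal d)⁻¹ = diagonal d⁻¹ := by
  refine inv_eq_right_inv ?_
  rw [diagonal_mul_diagonal, ← diagonal_one]
  exact congrArg diagonal (funext fun i => mul_inv_cancel₀ (hd i))

section CommRing

variable [CommRing R]

theorem mulVec_dotProduct_eq_dotProduct_transpose_mulVec (A : Matrix ι κ R) (u : κ → R)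
    (y : ι → R) : (A *ᵥ u) ⬝ᵥ y = u ⬝ᵥ (Aᵀ *ᵥ y) := by
  rw [← vecMul_transpose, ← dotProduct_mulVec]

theorem add_dotProduct_mulVec_add_of_isSymm {S : Matrix ι ι R} (hS : S.IsSymm) (x y : ι → R) :
    (x + y) ⬝ᵥ (S *ᵥ (x + y)) = x ⬝ᵥ (S *ᵥ x) + 2 * (y ⬝ᵥ (S *ᵥ x)) + y ⬝ᵥ (S *ᵥ y) := by
  have hxy : x ⬝ᵥ (S *ᵥ y) = y ⬝ᵥ (S *ᵥ x) := by
    rw [dotProduct_mulVec, ← mulVec_transpose, hS.eq, dotProduct_comm]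
  simp only [mulVec_add, dotProduct_add, add_dotProduct, hxy]
  ring

section Inverse

variable [DecidableEq κ]

theorem transpose_mul_mulVec_sub_eq_zero {S : Matrix ι ι R} {E : Matrix ι κ R}
    (hG : IsUnit (Eᵀ * S * E)) (f : ι → R) :
    (Eᵀ * S) *ᵥ (E *ᵥ (((Eᵀ * S * E)⁻¹ * Eᵀ * S) *ᵥ f) - f) = 0 := by
  rw [mulVec_sub, mulVec_mulVec, mulVec_mulVec, ← Matrix.mul_assoc, ← Matrix.mul_assoc,
    mul_nonsing_inv _ ((isUnit_iff_isUnit_det _).1 hG), Matrix.one_mul, sub_self]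

theorem dotProduct_mulVec_eq_mulVec_dotProduct_of_isSymm {S : Matrix ι ι R} (hS : S.IsSymm)
    (E : Matrix ι κ R) (c : κ → R) (f : ι → R) :
    c ⬝ᵥ (((Eᵀ * S * E)⁻¹ * Eᵀ * S) *ᵥ f) = ((S * E * (Eᵀ * S * E)⁻¹) *ᵥ c) ⬝ᵥ f := by
  have hG : (Eᵀ * S * E)ᵀ = Eᵀ * S * E := by
    rw [transpose_mul, transpose_mul, transpose_transpose, hS.eq, Matrix.mul_assoc]
  rw [dotProduct_mulVec, ← mulVec_transpose, transpose_mul, transpose_mul, transpose_nonsing_inv,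
    hG, hS.eq, transpose_transpose, ← Matrix.mul_assoc]

end Inverse

variable [DecidableEq ι]

def weightedSqError (w : ι → R) (E : Matrix ι κ R) (f : ι → R) (b : κ → R) : R :=
  ∑ i, w i * ((E *ᵥ b) i - f i) ^ 2

theorem weightedSqError_eq_dotProduct (w : ι → R) (E : Matrix ι κ R) (f : ι → R) (b : κ → R) :
    weightedSqError w E f b = (E *ᵥ b - f) ⬝ᵥ (diagonal w *ᵥ (E *ᵥ b - f)) := by
  simp only [weightedSqError, dotProduct, mulVec_diagonal, Pi.sub_apply]
  exact Finset.sum_congr rfl fun i _ => by ring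

theorem weightedSqError_eq_add_of_normal_eq {w : ι → R} {E : Matrix ι κ R} {f : ι → R}
    {b₀ : κ → R} (hnormal : (Eᵀ * diagonal w) *ᵥ (E *ᵥ b₀ - f) = 0) (b : κ → R) :
    weightedSqError w E f b =
      weightedSqError w E f b₀ + (b - b₀) ⬝ᵥ ((Eᵀ * diagonal w * E) *ᵥ (b - b₀)) := by
  have hres : E *ᵥ b - f = (E *ᵥ b₀ - f) + E *ᵥ (b - b₀) := by
    rw [mulVec_sub]; abel
  rw [weightedSqError_eq_dotProduct, weightedSqError_eq_dotProduct, hres,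
    add_dotProduct_mulVec_add_of_isSymm (isSymm_diagonal w),
    mulVec_dotProduct_eq_dotProduct_transpose_mulVec, mulVec_mulVec, hnormal, dotProduct_zero,
    mulVec_dotProduct_eq_dotProduct_transpose_mulVec, mulVec_mulVec, mulVec_mulVec, mul_zero,
    add_zero]

end CommRing

variable [DecidableEq ι] {w : ι → ℝ} {E : Matrix ι κ ℝ}

theorem posDef_transpose_mul_diagonal_mul (hw : ∀ i, 0 < w i)
    (hE : Function.Injective E.mulVec) : (Eᵀ * diagonal w * E).PosDef := by
  simpa only [conjTranspose_eq_transpose_of_trivial] using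
    (posDef_diagonal_iff.2 hw).conjTranspose_mul_mul_same hE

theorem weightedSqError_lt_of_ne [DecidableEq κ] (hw : ∀ i, 0 < w i)
    (hE : Function.Injective E.mulVec) (f : ι → ℝ) {b : κ → ℝ}
    (hb : b ≠ ((Eᵀ * diagonal w * E)⁻¹ * Eᵀ * diagonal w) *ᵥ f) :
    weightedSqError w E f (((Eᵀ * diagonal w * E)⁻¹ * Eᵀ * diagonal w) *ᵥ f) <
      weightedSqError w E f b := by
  have hG := posDef_transpose_mul_diagonal_mul hw hE
  rw [weightedSqError_eq_add_of_normal_eq (transpose_mul_mulVec_sub_eq_zero hG.isUnit f) b]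
  simpa using hG.dotProduct_mulVec_pos (sub_ne_zero.2 hb)

end Matrix

theorem levin_part2_general (m l : ℕ)
    (E : Matrix (Fin m) (Fin l) ℝ) (hE : E.rank = l)
    (d : Fin m → ℝ) (hd : ∀ i, 0 < d i)
    (f : Fin m → ℝ) (c : Fin l → ℝ)
    (D : Matrix (Fin m) (Fin m) ℝ) (hD : D = Matrix.diagonal d)
    (Q : (Fin l → ℝ) → ℝ)
    (hQ : Q = fun b => ∑ i, (d i)⁻¹ * ((E *ᵥ b) i - f i) ^ 2)
    (bstar : Fin l → ℝ)
    (hbstar : bstar = ((Eᵀ * D⁻¹ * E)⁻¹ * Eᵀ * D⁻¹) *ᵥ f)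
    (a : Fin m → ℝ)
    (ha : a = (D⁻¹ * E * (Eᵀ * D⁻¹ * E)⁻¹) *ᵥ c) :
    (∀ b : Fin l → ℝ, b ≠ bstar → Q bstar < Q b) ∧ c ⬝ᵥ bstar = a ⬝ᵥ f := by
  subst hD hQ hbstar ha
  have hDinv : (diagonal d)⁻¹ = diagonal d⁻¹ := inv_diagonal_of_ne_zero fun i => (hd i).ne'
  have hw : ∀ i, 0 < d⁻¹ i := fun i => inv_pos.2 (hd i)
  have hEinj := mulVec_injective_of_rank_eq_card (hE.trans (Fintype.card_fin l).symm)
  exact ⟨fun b hb => by rw [hDinv] at hb ⊢; exact weightedSqError_lt_of_ne hw hEinj f hb,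
    dotProduct_mulVec_eq_mulVec_dotProduct_of_isSymm (isSymm_diagonal d).inv E c f⟩

/-- Part (2) of Levin's theorem: for a full-column-rank matrix `E` and a
positive diagonal matrix `D`, the vector `b* = (Eᵀ D⁻¹ E)⁻¹ Eᵀ D⁻¹ f` is the
unique minimizer of the weighted least-squares error
`Q(b) = ∑ i, D ii⁻¹ ((E b) i − f i)²`, and `cᵀ b* = aᵀ f` where
`a = D⁻¹ E (Eᵀ D⁻¹ E)⁻¹ c`. -/
theorem levin_part2 (m l : ℕ) (hm : 0 < m) (hl : 0 < l) (hlm : l ≤ m)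
    (E : Matrix (Fin m) (Fin l) ℝ) (hE : E.rank = l)
    (d : Fin m → ℝ) (hd : ∀ i, 0 < d i)
    (f : Fin m → ℝ) (c : Fin l → ℝ)
    (D : Matrix (Fin m) (Fin m) ℝ) (hD : D = Matrix.diagonal d)
    (Q : (Fin l → ℝ) → ℝ)
    (hQ : Q = fun b => ∑ i, (d i)⁻¹ * ((E *ᵥ b) i - f i) ^ 2)
    (bstar : Fin l → ℝ)
    (hbstar : bstar = ((Eᵀ * D⁻¹ * E)⁻¹ * Eᵀ * D⁻¹) *ᵥ f)
    (a : Fin m → ℝ)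
    (ha : a = (D⁻¹ * E * (Eᵀ * D⁻¹ * E)⁻¹) *ᵥ c) :
    (∀ b : Fin l → ℝ, b ≠ bstar → Q bstar < Q b) ∧ c ⬝ᵥ bstar = a ⬝ᵥ f :=
  levin_part2_general m l E hE d hd f c D hD Q hQ bstar hbstar a ha
end

section
/- Let n ≥ 0 and j ≥ 1 be integers with j ≤ n + 1. Then for every real t with j − 1 ≤ t < n + 1, the uniform B-spline basis functions satisfy the partition of unity identity Σ_{i=0}^{n} B_{i,j}(t) = 1. -/
/-!
The basis functions of order one are the indicators of the knot intervals `[i, i + 1)`, and at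
each point `t ≥ 0` exactly one of them is `1`. Summing the Cox–de Boor recursion over `i`
and shifting the index of its second term, the two coefficients of each `B i k` add up to `1`,
so `∑ B i (k + 1) t = ∑ B i k t` up to two boundary terms, carried by `B 0 k` and `B (n + 1) k`.
These vanish because `B i k` is supported in `[i, i + k)`, and the hypothesis `k ≤ t < n + 1`
of the step to order `k + 1` keeps `t` outside the supports of both.
-/

/-- Uniform B-spline basis functions `B i j` with integer knots `tᵢ = i`,
defined by the Cox–de Boor recursion. -/
noncomputable def B : ℕ → ℕ → ℝ → ℝ
  | _, 0, _ => 0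
  | i, 1, t => if (i : ℝ) ≤ t ∧ t < (i : ℝ) + 1 then 1 else 0
  | i, (j+2), t =>
      ((t - (i : ℝ)) / ((j : ℝ) + 1)) * B i (j+1) t
        + (((i : ℝ) + ((j : ℝ) + 2) - t) / ((j : ℝ) + 1)) * B (i+1) (j+1) t

open Finset

lemma B_succ (i : ℕ) {k : ℕ} (hk : k ≠ 0) (t : ℝ) :
    B i (k + 1) t = (t - i) / k * B i k t + (i + k + 1 - t) / k * B (i + 1) k t := by
  obtain ⟨m, rfl⟩ := Nat.exists_eq_add_one_of_ne_zero hk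
  simp only [B, Nat.cast_add, Nat.cast_one]
  ring_nf

lemma B_eq_zero_of_notMem_Ico {i j : ℕ} {t : ℝ} (ht : t ∉ Set.Ico (i : ℝ) (i + j)) :
    B i j t = 0 := by
  induction i, j, t using B.induct with
  | case1 => rfl
  | case2 i t hit => exact absurd (by simpa using hit) ht
  | case3 i t hit => simp only [B, if_neg hit]
  | case4 i j t ih ih' =>
    simp only [Set.mem_Ico, not_and, not_lt, Nat.cast_succ] at ht ih ih'
    have h : B i (j + 1) t = 0 := ih fun hi => by linarith [ht hi]
    have h' : B (i + 1) (j + 1) t = 0 := ih' fun hi => by linarith [ht (by linarith)]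
    simp only [B, h, h', mul_zero, add_zero]

lemma B_one_eq_ite_floor (i : ℕ) {t : ℝ} (ht : 0 ≤ t) :
    B i 1 t = if ⌊t⌋₊ = i then 1 else 0 := by
  simp only [B, Nat.floor_eq_iff ht]

lemma sum_range_B_one {n : ℕ} {t : ℝ} (ht₀ : 0 ≤ t) (ht : t < n + 1) :
    ∑ i ∈ range (n + 1), B i 1 t = 1 := by
  have hfloor : ⌊t⌋₊ ∈ range (n + 1) :=
    mem_range.2 ((Nat.floor_lt ht₀).2 (by exact_mod_cast ht))
  simp only [B_one_eq_ite_floor _ ht₀, sum_ite_eq, if_pos hfloor]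

lemma sum_range_B_succ {n k : ℕ} (hk : k ≠ 0) {t : ℝ} (h₀ : B 0 k t = 0)
    (hn : B (n + 1) k t = 0) :
    ∑ i ∈ range (n + 1), B i (k + 1) t = ∑ i ∈ range (n + 1), B i k t := by
  set c : ℕ → ℝ := fun i => (i + k - t) / k
  have hshift : ∑ i ∈ range (n + 1), (i + k + 1 - t) / k * B (i + 1) k t
      = ∑ i ∈ range (n + 1), c i * B i k t := by
    have h := sum_range_succ' (fun i => c i * B i k t) (n + 1)
    rw [sum_range_succ _ (n + 1), hn, h₀] at h
    simp only [mul_zero, add_zero] at h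
    rw [h]
    refine sum_congr rfl fun i _ => ?_
    simp only [c, Nat.cast_succ]
    ring_nf
  rw [sum_congr rfl fun i _ => B_succ i hk t, sum_add_distrib, hshift, ← sum_add_distrib]
  refine sum_congr rfl fun i _ => ?_
  simp only [c]
  field_simp
  ring

theorem bspline_partition_of_unity_general (n j : ℕ) (hj : 1 ≤ j)
    (t : ℝ) (h1 : (j : ℝ) - 1 ≤ t) (h2 : t < (n : ℝ) + 1) :
    ∑ i ∈ Finset.range (n + 1), B i j t = 1 := by
  induction j, hj using Nat.le_induction with
  | base => exact sum_range_B_one (by simpa using h1) h2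
  | succ k hk ih =>
    push_cast at h1
    have h₀ : B 0 k t = 0 := B_eq_zero_of_notMem_Ico fun ht => by
      simp only [Set.mem_Ico, CharP.cast_eq_zero, zero_add] at ht; linarith [ht.2]
    have hn : B (n + 1) k t = 0 := B_eq_zero_of_notMem_Ico fun ht => by
      simp only [Set.mem_Ico, Nat.cast_add, Nat.cast_one] at ht; linarith [ht.1]
    rw [sum_range_B_succ (by omega) h₀ hn]
    exact ih (by linarith)

/-- (BS-3): partition of unity for uniform B-spline basis functions. -/
theorem bspline_partition_of_unity (n j : ℕ) (hj : 1 ≤ j) (hjn : j ≤ n + 1)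
    (t : ℝ) (h1 : (j : ℝ) - 1 ≤ t) (h2 : t < (n : ℝ) + 1) :
    ∑ i ∈ Finset.range (n + 1), B i j t = 1 :=
  bspline_partition_of_unity_general n j hj t h1 h2
end

section
/- Let r ≥ 1 and n ≥ r − 1 be integers and f : ℝ → ℝ any function. For every real t with r − 1 < t < n + 1, the function p ↦ Σ_{i=0}^{n} B_{0,r}(t − i)·(p − f(i))² of the real variable p has a unique minimizer p* ∈ ℝ, and p* equals the B-spline value Σ_{i=0}^{n} B_{i,r}(t)·f(i); that is, every uniform B-spline curve of order r is, at each parameter value, the minimizer of a positive quadratic moving least-squares error whose weight function is the translate-invariant basis function W(s) = B_{0,r}(s). -/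
lemma B_one (i : ℕ) (t : ℝ) : B i 1 t = if (i : ℝ) ≤ t ∧ t < i + 1 then 1 else 0 := rfl

lemma B_add_two (i j : ℕ) (t : ℝ) :
    B i (j + 2) t =
      (t - i) / (j + 1) * B i (j + 1) t + (i + (j + 2) - t) / (j + 1) * B (i + 1) (j + 1) t :=
  rfl

lemma B_eq_zero_of_lt {i j : ℕ} {t : ℝ} (ht : t < i) : B i j t = 0 := by
  induction j generalizing i with
  | zero => rfl
  | succ j ih =>
    rcases j with _ | j
    · simp [B_one, not_le.2 ht]
    · rw [B_add_two, ih ht, ih (by push_cast; linarith), mul_zero, mul_zero, add_zero]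

lemma B_eq_zero_of_add_le {i j : ℕ} {t : ℝ} (ht : (i : ℝ) + j ≤ t) : B i j t = 0 := by
  induction j generalizing i with
  | zero => rfl
  | succ j ih =>
    push_cast at ht
    rcases j with _ | j
    · rw [B_one, if_neg]
      rintro ⟨-, h⟩
      simp only [Nat.cast_zero, zero_add] at ht
      linarith
    · rw [B_add_two, ih (by push_cast at ht ⊢; linarith), ih (by push_cast at ht ⊢; linarith),
        mul_zero, mul_zero, add_zero]

lemma B_eq_B_zero_sub (i j : ℕ) (t : ℝ) : B i j t = B 0 j (t - i) := by
  induction j generalizing i t with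
  | zero => rfl
  | succ j ih =>
    rcases j with _ | j
    · simp only [B_one, Nat.cast_zero, sub_nonneg, zero_add, sub_lt_iff_lt_add']
    · rw [B_add_two, B_add_two, ih i, ih (i + 1), ih 1]
      push_cast
      ring_nf

lemma sum_range_succ_shift_of_eq_zero {M : Type*} [AddCommMonoid M] (g : ℕ → M) (m : ℕ)
    (h0 : g 0 = 0) (hm : g (m + 1) = 0) :
    ∑ i ∈ Finset.range (m + 1), g (i + 1) = ∑ i ∈ Finset.range (m + 1), g i := by
  have h := (Finset.sum_range_succ' g (m + 1)).symm.trans (Finset.sum_range_succ g (m + 1))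
  rwa [h0, hm, add_zero, add_zero] at h

lemma sum_range_B_one_s14 {m : ℕ} {t : ℝ} (h0 : 0 < t) (hm : t < m + 1) :
    ∑ i ∈ Finset.range (m + 1), B i 1 t = 1 := by
  have hfloor : ⌊t⌋₊ < m + 1 := by
    rw [Nat.floor_lt h0.le]; exact_mod_cast hm
  rw [Finset.sum_eq_single_of_mem _ (Finset.mem_range.2 hfloor)]
  · rw [B_one, if_pos ⟨Nat.floor_le h0.le, Nat.lt_floor_add_one t⟩]
  · intro i _ hi
    rw [B_one, if_neg]
    exact fun hti => hi (Nat.floor_eq_on_Ico i t hti).symm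

lemma sum_range_B_eq_one (j : ℕ) {m : ℕ} {t : ℝ} (hj : j < t) (hm : t < m + 1) :
    ∑ i ∈ Finset.range (m + 1), B i (j + 1) t = 1 := by
  induction j with
  | zero => exact sum_range_B_one_s14 (by exact_mod_cast hj) hm
  | succ j ih =>
    push_cast at hj
    set g : ℕ → ℝ := fun i => (i + (j + 1) - t) / (j + 1) * B i (j + 1) t
    have hshift :
        ∑ i ∈ Finset.range (m + 1), g (i + 1) = ∑ i ∈ Finset.range (m + 1), g i := by
      refine sum_range_succ_shift_of_eq_zero g m ?_ ?_
      · have hB : B 0 (j + 1) t = 0 := B_eq_zero_of_add_le (by push_cast; linarith)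
        simp only [g, hB, mul_zero]
      · have hB : B (m + 1) (j + 1) t = 0 := B_eq_zero_of_lt (by push_cast; linarith)
        simp only [g, hB, mul_zero]
    have hj1 : (j : ℝ) + 1 ≠ 0 := by positivity
    calc ∑ i ∈ Finset.range (m + 1), B i (j + 1 + 1) t
        = ∑ i ∈ Finset.range (m + 1), ((t - i) / (j + 1) * B i (j + 1) t + g (i + 1)) := by
          refine Finset.sum_congr rfl fun i _ => ?_
          rw [B_add_two]; simp only [g]; push_cast; ring_nf
      _ = ∑ i ∈ Finset.range (m + 1),
            ((t - i) / (j + 1) + (i + (j + 1) - t) / (j + 1)) * B i (j + 1) t := by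
          rw [Finset.sum_add_distrib, hshift, ← Finset.sum_add_distrib]
          simp only [g, add_mul]
      _ = ∑ i ∈ Finset.range (m + 1), B i (j + 1) t := by
          refine Finset.sum_congr rfl fun i _ => ?_
          rw [← add_div, div_eq_one_iff_eq hj1 |>.mpr (by ring), one_mul]
      _ = 1 := ih (by linarith)

lemma sum_mul_sub_sq_eq_sum_mul_sub_sq_add_sq {ι : Type*} (s : Finset ι) (w f : ι → ℝ)
    (hw : ∑ i ∈ s, w i = 1) (p : ℝ) :
    ∑ i ∈ s, w i * (p - f i) ^ 2
      = ∑ i ∈ s, w i * (∑ k ∈ s, w k * f k - f i) ^ 2 + (p - ∑ k ∈ s, w k * f k) ^ 2 := by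
  have expand : ∀ x, ∑ i ∈ s, w i * (x - f i) ^ 2 =
      x ^ 2 * ∑ i ∈ s, w i - 2 * x * ∑ i ∈ s, w i * f i + ∑ i ∈ s, w i * f i ^ 2 := by
    intro x
    simp only [Finset.mul_sum, ← Finset.sum_sub_distrib, ← Finset.sum_add_distrib]
    exact Finset.sum_congr rfl fun i _ => by ring
  rw [expand, expand, hw]
  ring

theorem bspline_curve_minimizes_quadratic_general (r n : ℕ) (hr : 1 ≤ r)
    (f : ℝ → ℝ) (t : ℝ)
    (h1 : (r : ℝ) - 1 < t) (h2 : t < (n : ℝ) + 1)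
    (Q : ℝ → ℝ)
    (hQ : Q = fun p => ∑ i ∈ Finset.range (n + 1), B 0 r (t - i) * (p - f i) ^ 2)
    (pstar : ℝ)
    (hpstar : pstar = ∑ i ∈ Finset.range (n + 1), B i r t * f i) :
    ∀ p : ℝ, p ≠ pstar → Q pstar < Q p := by
  intro p hp
  obtain ⟨j, rfl⟩ : ∃ j, r = j + 1 := ⟨r - 1, by omega⟩
  have hsum : ∑ i ∈ Finset.range (n + 1), B i (j + 1) t = 1 :=
    sum_range_B_eq_one j (by push_cast at h1; linarith) h2
  have hQB : ∀ x, Q x = ∑ i ∈ Finset.range (n + 1), B i (j + 1) t * (x - f i) ^ 2 := by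
    simp [hQ, B_eq_B_zero_sub _ (j + 1) t]
  have hgap : Q p = Q pstar + (p - pstar) ^ 2 := by
    rw [hQB, hQB, hpstar, sum_mul_sub_sq_eq_sum_mul_sub_sq_add_sq _ _ _ hsum]
  linarith [sq_pos_of_ne_zero (sub_ne_zero.2 hp)]

/-- Every uniform B-spline curve of order `r` is, at each parameter value
`t ∈ (r − 1, n + 1)`, the unique minimizer of the positive quadratic moving
least-squares error with the translate-invariant weight `W s = B 0 r s`:
the error `p ↦ ∑_{i=0}^{n} B 0 r (t − i) (p − f i)²` is uniquely minimized by
`p* = ∑_{i=0}^{n} B i r t · f i`. -/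
theorem bspline_curve_minimizes_quadratic (r n : ℕ) (hr : 1 ≤ r)
    (hn : r - 1 ≤ n) (f : ℝ → ℝ) (t : ℝ)
    (h1 : (r : ℝ) - 1 < t) (h2 : t < (n : ℝ) + 1)
    (Q : ℝ → ℝ)
    (hQ : Q = fun p => ∑ i ∈ Finset.range (n + 1), B 0 r (t - i) * (p - f i) ^ 2)
    (pstar : ℝ)
    (hpstar : pstar = ∑ i ∈ Finset.range (n + 1), B i r t * f i) :
    ∀ p : ℝ, p ≠ pstar → Q pstar < Q p :=
  bspline_curve_minimizes_quadratic_general r n hr f t h1 h2 Q hQ pstar hpstar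
end
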